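/- Let G be a group, lk : G → ℤ a homomorphism, and P a subgroup of G generated by elements m, b₁, …, bₙ with lk(m) = 1 and lk(b_j) = 0 for all j, and such that m commutes with each b_j. Then {g ∈ P : lk(g) = 0} equals the subgroup generated by b₁, …, bₙ. -/
import Mathlib


/-- If `P = ⟨m, b₁, …, bₙ⟩` with `lk m = 1`, `lk (b j) = 0`, and `m` commuting with
each `b j`, then the longitude group `{g ∈ P : lk g = 0}` is exactly `⟨b₁, …, bₙ⟩`. -/
theorem longitude_group_eq_closure {G : Type} [Group G] {n : ℕ}
    (lk : G →* Multiplicative ℤ) (m : G) (b : Fin n → G)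
    (hm : lk m = Multiplicative.ofAdd 1)
    (hb : ∀ j, lk (b j) = 1)
    (hcomm : ∀ j, Commute m (b j)) :
    {g | g ∈ Subgroup.closure ({m} ∪ Set.range b) ∧ lk g = 1} =
      (Subgroup.closure (Set.range b) : Set G) := by
  have hker : Subgroup.closure (Set.range b) ≤ lk.ker := by
    rw [Subgroup.closure_le]
    rintro _ ⟨j, rfl⟩
    exact hb j
  have hc : ∀ h ∈ Subgroup.closure (Set.range b), Commute m h := by
    intro h hh
    induction hh using Subgroup.closure_induction with
    | mem x hx => obtain ⟨j, rfl⟩ := hx; exact hcomm j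
    | one => exact Commute.one_right m
    | mul x y _ _ hx hy => exact hx.mul_right hy
    | inv x _ hx => exact hx.inv_right
  have key : ∀ g ∈ Subgroup.closure ({m} ∪ Set.range b),
      ∃ k : ℤ, ∃ h ∈ Subgroup.closure (Set.range b), g = m ^ k * h := by
    intro g hg
    induction hg using Subgroup.closure_induction with
    | mem x hx =>
      rcases hx with hx | hx
      · exact ⟨1, 1, Subgroup.one_mem _, by simp [Set.mem_singleton_iff.mp hx]⟩
      · exact ⟨0, x, Subgroup.subset_closure hx, by simp⟩
    | one => exact ⟨0, 1, Subgroup.one_mem _, by simp⟩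
    | mul x y _ _ hx hy =>
      obtain ⟨k1, h1, hh1, rfl⟩ := hx
      obtain ⟨k2, h2, hh2, rfl⟩ := hy
      refine ⟨k1 + k2, h1 * h2, Subgroup.mul_mem _ hh1 hh2, ?_⟩
      have := (hc h1 hh1).zpow_left k2
      calc m ^ k1 * h1 * (m ^ k2 * h2) = m ^ k1 * (h1 * m ^ k2) * h2 := by group
        _ = m ^ k1 * (m ^ k2 * h1) * h2 := by rw [this.eq]
        _ = m ^ (k1 + k2) * (h1 * h2) := by rw [zpow_add]; group
    | inv x _ hx =>
      obtain ⟨k, h, hh, rfl⟩ := hx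
      refine ⟨-k, h⁻¹, Subgroup.inv_mem _ hh, ?_⟩
      have := ((hc h hh).zpow_left (-k)).inv_right
      rw [mul_inv_rev, ← zpow_neg, ← this.eq]
  ext g
  simp only [Set.mem_setOf_eq, SetLike.mem_coe]
  constructor
  · rintro ⟨hg, hlk⟩
    obtain ⟨k, h, hh, rfl⟩ := key g hg
    have hlkh : lk h = 1 := hker hh
    have : (Multiplicative.ofAdd (1 : ℤ)) ^ k = 1 := by
      simpa [hlkh, hm] using hlk
    have hk : k = 0 := by
      have := congrArg Multiplicative.toAdd this
      simpa [← ofAdd_zsmul] using this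
    simpa [hk] using hh
  · intro hg
    exact ⟨Subgroup.closure_mono Set.subset_union_right hg, hker hg⟩
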